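/- arXiv:2605.05198 — 4 statements merged into one kernel-verified Lean document; each statement's English description precedes it below -/
import Mathlib

section
/- For every seed x₀ in ZMod (2^n + 1), if p is the smallest positive integer with f^[p](x₀) = x₀, then p divides 2n; in particular the period of any seed under the S-LCG map is at most 2n. -/
lemma slcg_iter (n k : ℕ) (x : ZMod (2 ^ n + 1)) :
    (fun x : ZMod (2 ^ n + 1) => 2 * x + 1)^[k] x = 2 ^ k * (x + 1) - 1 := by
  induction k with
  | zero => simp
  | succ k ih =>
      rw [Function.iterate_succ_apply', ih]
      ring

/-- If `p` is the smallest positive integer with `f^[p] x₀ = x₀` for the S-LCG map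
`f x = 2*x + 1` on `ZMod (2^n + 1)`, then `p` divides `2n`; in particular `p ≤ 2n`. -/
theorem slcg_period_dvd_two_n (n : ℕ) (hn : 1 ≤ n) (x₀ : ZMod (2 ^ n + 1)) (p : ℕ)
    (hp : 0 < p)
    (hfix : (fun x : ZMod (2 ^ n + 1) => 2 * x + 1)^[p] x₀ = x₀)
    (hmin : ∀ q : ℕ, 0 < q → (fun x : ZMod (2 ^ n + 1) => 2 * x + 1)^[q] x₀ = x₀ → p ≤ q) :
    p ∣ 2 * n ∧ p ≤ 2 * n := by
  set f : ZMod (2 ^ n + 1) → ZMod (2 ^ n + 1) := fun x => 2 * x + 1 with hf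
  have hpow : (2 : ZMod (2 ^ n + 1)) ^ n = -1 := by
    have : ((2 ^ n + 1 : ℕ) : ZMod (2 ^ n + 1)) = 0 := by
      exact_mod_cast ZMod.natCast_self _
    push_cast at this
    linear_combination this
  have h2n : f^[2 * n] x₀ = x₀ := by
    rw [hf, slcg_iter]
    have : (2 : ZMod (2 ^ n + 1)) ^ (2 * n) = 1 := by
      rw [mul_comm, pow_mul, hpow]; ring
    rw [this]; ring
  have hper : Function.IsPeriodicPt f p x₀ := hfix
  have hperiodic : Function.minimalPeriod f x₀ = p := by
    have h1 : Function.minimalPeriod f x₀ ≤ p := hper.minimalPeriod_le hp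
    have hpos : 0 < Function.minimalPeriod f x₀ := hper.minimalPeriod_pos hp
    have h2 : p ≤ Function.minimalPeriod f x₀ :=
      hmin _ hpos (Function.iterate_minimalPeriod)
    omega
  have hdvd : p ∣ 2 * n := by
    rw [← hperiodic]
    exact Function.IsPeriodicPt.minimalPeriod_dvd h2n
  exact ⟨hdvd, Nat.le_of_dvd (by omega) hdvd⟩
end

section
/- Let x₀ be a seed in ZMod (2^n + 1), represented by its canonical value in {0, 1, …, 2^n}, and suppose gcd(x₀ + 1, 2^n + 1) = 1 (as natural numbers). Then the smallest positive integer p with f^[p](x₀) = x₀ equals exactly 2n. -/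
lemma slcg_iter_add_one (m : ℕ) (p : ℕ) (x : ZMod m) :
    (fun x : ZMod m => 2 * x + 1)^[p] x + 1 = 2 ^ p * (x + 1) := by
  induction p with
  | zero => simp
  | succ p ih =>
      rw [Function.iterate_succ_apply']
      show 2 * ((fun x : ZMod m => 2 * x + 1)^[p] x) + 1 + 1 = 2 ^ (p + 1) * (x + 1)
      calc 2 * ((fun x : ZMod m => 2 * x + 1)^[p] x) + 1 + 1
          = 2 * ((fun x : ZMod m => 2 * x + 1)^[p] x + 1) := by ring
        _ = 2 ^ (p + 1) * (x + 1) := by rw [ih]; ring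

/-- If the canonical value of the seed `x₀` satisfies `gcd (x₀ + 1) (2^n + 1) = 1`,
then the smallest positive `p` with `f^[p] x₀ = x₀` is exactly `2n`, where
`f x = 2*x + 1` on `ZMod (2^n + 1)`. -/
theorem slcg_period_eq_two_n_of_coprime (n : ℕ) (hn : 1 ≤ n) (x₀ : ZMod (2 ^ n + 1))
    (hgcd : Nat.gcd (x₀.val + 1) (2 ^ n + 1) = 1) :
    IsLeast {p : ℕ | 0 < p ∧ (fun x : ZMod (2 ^ n + 1) => 2 * x + 1)^[p] x₀ = x₀} (2 * n) := by
  have hm1 : 1 < 2 ^ n + 1 := by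
    have : 2 ≤ 2 ^ n := Nat.one_lt_two_pow_iff.mpr (by omega)
    omega
  haveI : Fact (1 < 2 ^ n + 1) := ⟨hm1⟩
  -- 2^n = -1 in ZMod (2^n+1)
  have hpow : (2 : ZMod (2 ^ n + 1)) ^ n = -1 := by
    have h0 : ((2 ^ n + 1 : ℕ) : ZMod (2 ^ n + 1)) = 0 := ZMod.natCast_self _
    push_cast at h0
    linear_combination h0
  -- x₀ + 1 is a unit
  have hu : IsUnit (x₀ + 1) := by
    have h := (ZMod.isUnit_iff_coprime (x₀.val + 1) (2 ^ n + 1)).mpr hgcd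
    have he : ((x₀.val + 1 : ℕ) : ZMod (2 ^ n + 1)) = x₀ + 1 := by
      push_cast
      rw [ZMod.natCast_val, ZMod.cast_id]
    rwa [he] at h
  -- the key equivalence
  have hiff : ∀ p : ℕ,
      (fun x : ZMod (2 ^ n + 1) => 2 * x + 1)^[p] x₀ = x₀ ↔
        (2 : ZMod (2 ^ n + 1)) ^ p = 1 := by
    intro p
    constructor
    · intro h
      have h2 : (2 : ZMod (2 ^ n + 1)) ^ p * (x₀ + 1) = 1 * (x₀ + 1) := by
        rw [one_mul, ← slcg_iter_add_one, h]
      exact hu.mul_right_cancel h2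
    · intro h
      have h2 := slcg_iter_add_one (2 ^ n + 1) p x₀
      rw [h, one_mul] at h2
      exact add_right_cancel h2
  -- val of 2^k for k ≤ n
  have hval : ∀ k : ℕ, k ≤ n → ((2 : ZMod (2 ^ n + 1)) ^ k).val = 2 ^ k := by
    intro k hk
    have he : (2 : ZMod (2 ^ n + 1)) ^ k = ((2 ^ k : ℕ) : ZMod (2 ^ n + 1)) := by
      push_cast; ring
    rw [he, ZMod.val_cast_of_lt]
    have : 2 ^ k ≤ 2 ^ n := Nat.pow_le_pow_right (by norm_num) hk
    omega
  constructor
  · refine ⟨by omega, ?_⟩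
    rw [hiff]
    rw [mul_comm, pow_mul, hpow, neg_one_sq]
  · rintro p ⟨hp0, hpe⟩
    rw [hiff] at hpe
    by_contra hlt
    push_neg at hlt
    by_cases hle : p ≤ n
    · have h1 := congrArg ZMod.val hpe
      rw [hval p hle, ZMod.val_one] at h1
      have : 2 ≤ 2 ^ p := Nat.one_lt_two_pow_iff.mpr (by omega)
      omega
    · push_neg at hle
      have hsplit : (2 : ZMod (2 ^ n + 1)) ^ p =
          (2 : ZMod (2 ^ n + 1)) ^ (p - n) * (2 : ZMod (2 ^ n + 1)) ^ n := by
        rw [← pow_add]; congr 1; omega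
      rw [hsplit, hpow] at hpe
      have h2 : (2 : ZMod (2 ^ n + 1)) ^ (p - n) = (2 : ZMod (2 ^ n + 1)) ^ n := by
        rw [hpow]; linear_combination -hpe
      have h3 := congrArg ZMod.val h2
      rw [hval (p - n) (by omega), hval n le_rfl] at h3
      have := Nat.pow_right_injective (le_refl 2) h3
      omega
end

section
/- The seed x₀ = 0 in ZMod (2^n + 1) achieves the maximum period: the smallest positive integer p with f^[p](0) = 0 equals 2n. -/
lemma slcg_iter_zero (m : ℕ) (p : ℕ) :
    (fun x : ZMod m => 2 * x + 1)^[p] 0 = 2 ^ p - 1 := by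
  induction p with
  | zero => simp
  | succ p ih =>
    rw [Function.iterate_succ_apply', ih]
    ring

/-- The seed `x₀ = 0` achieves the maximum period: the smallest positive `p` with
`f^[p] 0 = 0` equals `2n`, where `f x = 2*x + 1` on `ZMod (2^n + 1)`. -/
theorem slcg_period_zero_eq_two_n (n : ℕ) (hn : 1 ≤ n) :
    IsLeast {p : ℕ | 0 < p ∧
      (fun x : ZMod (2 ^ n + 1) => 2 * x + 1)^[p] (0 : ZMod (2 ^ n + 1)) = 0} (2 * n) := by
  have hmn : (2 : ZMod (2 ^ n + 1)) ^ n = -1 := by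
    have h0 : ((2 ^ n + 1 : ℕ) : ZMod (2 ^ n + 1)) = 0 := ZMod.natCast_self _
    push_cast at h0
    linear_combination h0
  constructor
  · refine ⟨by omega, ?_⟩
    rw [slcg_iter_zero, sub_eq_zero]
    rw [two_mul, pow_add, hmn]
    ring
  · rintro p ⟨hp, hiter⟩
    rw [slcg_iter_zero, sub_eq_zero] at hiter
    -- get natural divisibility
    have h1 : 1 ≤ 2 ^ p := Nat.one_le_two_pow
    have hdvd : (2 ^ n + 1) ∣ (2 ^ p - 1) := by
      have : ((2 ^ p - 1 : ℕ) : ZMod (2 ^ n + 1)) = 0 := by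
        push_cast [Nat.cast_sub h1]
        rw [hiter]; ring
      exact (ZMod.natCast_eq_zero_iff _ _).mp this
    by_contra hlt
    push_neg at hlt
    rcases le_or_gt p n with hpn | hpn
    · have hlt2 : 2 ^ p - 1 < 2 ^ n + 1 := by
        have := Nat.pow_le_pow_right (by norm_num : 1 ≤ 2) hpn
        omega
      have hpos : 0 < 2 ^ p - 1 := by
        have : 2 ^ 1 ≤ 2 ^ p := Nat.pow_le_pow_right (by norm_num) hp
        omega
      have := Nat.le_of_dvd hpos hdvd
      omega
    · have hdvd2 : (2 ^ n + 1) ∣ 2 ^ p + 2 ^ (p - n) := by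
        refine ⟨2 ^ (p - n), ?_⟩
        have : 2 ^ p = 2 ^ (p - n) * 2 ^ n := by
          rw [← pow_add]
          congr 1
          omega
        rw [this]; ring
      have hdvd3 : (2 ^ n + 1) ∣ 2 ^ (p - n) + 1 := by
        have := Nat.dvd_sub hdvd2 hdvd
        have heq : 2 ^ p + 2 ^ (p - n) - (2 ^ p - 1) = 2 ^ (p - n) + 1 := by
          generalize 2 ^ p = a at h1 ⊢
          generalize 2 ^ (p - n) = b
          omega
        rwa [heq] at this
      have hsmall : 2 ^ (p - n) < 2 ^ n :=
        Nat.pow_lt_pow_right (by norm_num) (by omega)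
      have := Nat.le_of_dvd (by positivity) hdvd3
      omega
end

section
/- Every generator of the S-LCG map is even: for every x in ZMod (2^n + 1), the element of the orbit of x having smallest canonical value has even canonical value. -/
/-- The orbit of `x` under the S-LCG map `f x = 2*x + 1` on `ZMod (2^n + 1)`. -/
def slcgOrbit (n : ℕ) (x : ZMod (2 ^ n + 1)) : Set (ZMod (2 ^ n + 1)) :=
  {y | ∃ k : ℕ, (fun z : ZMod (2 ^ n + 1) => 2 * z + 1)^[k] x = y}

/-- Every generator of the S-LCG map is even: the element of minimal canonical value
in any orbit has even canonical value. -/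
theorem slcg_generator_even (n : ℕ) (hn : 1 ≤ n) (x α : ZMod (2 ^ n + 1))
    (hα : α ∈ slcgOrbit n x) (hmin : ∀ y ∈ slcgOrbit n x, α.val ≤ y.val) :
    Even α.val := by
  by_contra hodd
  rw [Nat.not_even_iff_odd] at hodd
  obtain ⟨t, ht⟩ := hodd
  have h2n : 1 ≤ 2 ^ n := Nat.one_le_two_pow
  have hmodd : Odd (2 ^ n + 1) := by
    rcases Nat.even_or_odd (2 ^ n) with h | h
    · exact h.add_one
    · exfalso
      rcases h with ⟨c, hc⟩
      have h2 : 2 ∣ 2 ^ n := dvd_pow_self 2 (by omega)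
      omega
  have hunit : IsUnit (2 : ZMod (2 ^ n + 1)) := by
    rw [show ((2 : ZMod (2 ^ n + 1))) = ((2 : ℕ) : ZMod (2 ^ n + 1)) by push_cast; ring,
      ZMod.isUnit_iff_coprime]
    exact hmodd.coprime_two_left
  have hinj : Function.Injective (fun z : ZMod (2 ^ n + 1) => 2 * z + 1) := by
    intro a b hab
    have h1 : 2 * a = 2 * b := by
      have : 2 * a + 1 = 2 * b + 1 := hab
      exact add_right_cancel this
    exact hunit.mul_left_cancel h1
  haveI : NeZero (2 ^ n + 1) := ⟨by omega⟩
  -- periodicity: there is N > 0 with f^[N] x = x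
  have hper : ∃ N, 0 < N ∧ (fun z : ZMod (2 ^ n + 1) => 2 * z + 1)^[N] x = x := by
    obtain ⟨i, j, hne, hij⟩ :=
      Fintype.exists_ne_map_eq_of_card_lt
        (fun j : Fin (Fintype.card (ZMod (2 ^ n + 1)) + 1) =>
          (fun z : ZMod (2 ^ n + 1) => 2 * z + 1)^[j] x)
        (by simp)
    rcases hne.lt_or_gt with h | h
    · refine ⟨(j : ℕ) - i, by omega, ?_⟩
      apply hinj.iterate (i : ℕ)
      rw [← Function.iterate_add_apply, Nat.add_sub_cancel' h.le, hij]
    · refine ⟨(i : ℕ) - j, by omega, ?_⟩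
      apply hinj.iterate (j : ℕ)
      rw [← Function.iterate_add_apply, Nat.add_sub_cancel' h.le, ← hij]
  obtain ⟨N, hN0, hNx⟩ := hper
  obtain ⟨k, hk⟩ := hα
  have hval : α.val < 2 ^ n + 1 := ZMod.val_lt α
  have htlt : t < 2 ^ n + 1 := by omega
  have hβval : ((t : ZMod (2 ^ n + 1))).val = t := ZMod.val_cast_of_lt htlt
  have hfβ : (fun z : ZMod (2 ^ n + 1) => 2 * z + 1) (t : ZMod (2 ^ n + 1)) = α := by
    have h1 : ((2 * t + 1 : ℕ) : ZMod (2 ^ n + 1)) = α := by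
      rw [← ht, ZMod.natCast_val, ZMod.cast_id]
    push_cast at h1 ⊢
    exact h1
  have hβorb : (t : ZMod (2 ^ n + 1)) ∈ slcgOrbit n x := by
    refine ⟨k + N - 1, ?_⟩
    apply hinj
    rw [hfβ]
    have hsucc : (fun z : ZMod (2 ^ n + 1) => 2 * z + 1)^[k + N - 1 + 1] x
        = (fun z : ZMod (2 ^ n + 1) => 2 * z + 1)
          ((fun z : ZMod (2 ^ n + 1) => 2 * z + 1)^[k + N - 1] x) :=
      Function.iterate_succ_apply' _ _ _
    rw [← hsucc, show k + N - 1 + 1 = k + N by omega,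
      Function.iterate_add_apply, hNx, hk]
  have := hmin _ hβorb
  rw [hβval] at this
  omega
end
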